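/- The without-replacement sampling probability of a set S admits the integral representation p(S) = ∫_{-∞}^{∞} f_{φ_{D\S}}(g) ∏_{i∈S} (1 - F_{φ_i}(g)) dg, where φ_i = log p(i), φ_{D\S} = log ∑_{i∈D\S} p(i), F_φ is the Gumbel(φ) CDF and f_φ its density. -/

import Mathlib

/-!
Both sides equal the inclusion–exclusion sum `∑_{T ⊆ S} (-1)^|T| c / (c + p(T))` with
`c = p(D \ S) = 1 - p(S)`. For the sampling probability this follows by strong induction on `S`
from the first-draw recursion, the remaining mass `c` being the same in every subproblem. For the
integral, expanding `∏_{i ∈ S} (1 - F_{φ_i})` turns the integrand into a signed combination of the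
Gumbel densities with rates `c + p(T)`, each of which integrates to one.
-/

open Finset MeasureTheory

variable {α : Type*}

/-- Probability of drawing the ordered sample `B` sequentially without replacement
from (unnormalized) weights `p`, when `t` is the total remaining probability mass. -/
noncomputable def ordProb (p : α → ℝ) : ℝ → List α → ℝ
  | _, [] => 1
  | t, b :: L => (p b / t) * ordProb p (t - p b) L

/-- Probability of drawing the unordered sample `S` without replacement:
sum of `ordProb` over all orderings of `S`. -/
noncomputable def setProb (p : α → ℝ) (t : ℝ) (S : Finset α) : ℝ :=
  (S.toList.permutations.map (ordProb p t)).sum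

open Filter Topology Real

section SetProb

@[simp]
lemma setProb_empty (p : α → ℝ) (t : ℝ) : setProb p t (∅ : Finset α) = 1 := by
  simp [setProb, ordProb]

variable [DecidableEq α]

lemma setProb_eq_sum_toFinset (p : α → ℝ) (t : ℝ) (S : Finset α) :
    setProb p t S = ∑ l ∈ S.toList.permutations.toFinset, ordProb p t l := by
  rw [setProb, ← List.sum_toFinset _ (List.nodup_permutations _ S.nodup_toList)]

lemma Finset.toList_perm_cons_toList_erase {S : Finset α} {a : α} (ha : a ∈ S) :
    S.toList.Perm (a :: (S.erase a).toList) := by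
  simpa [insert_erase ha] using toList_insert (notMem_erase a S)

lemma Finset.toFinset_permutations_toList_eq_biUnion {S : Finset α} (hS : S.Nonempty) :
    S.toList.permutations.toFinset =
      S.biUnion fun a ↦ (S.erase a).toList.permutations.toFinset.image (List.cons a) := by
  ext l
  simp only [List.mem_toFinset, List.mem_permutations, mem_biUnion, mem_image]
  constructor
  · intro hl
    obtain ⟨a, l', rfl⟩ : ∃ a l', l = a :: l' := by
      refine List.exists_cons_of_ne_nil fun hnil ↦ hS.ne_empty ?_
      rw [hnil] at hl
      exact toList_eq_nil.mp hl.symm.eq_nil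
    have ha : a ∈ S := mem_toList.mp (hl.subset List.mem_cons_self)
    exact ⟨a, ha, l', (hl.trans (toList_perm_cons_toList_erase ha)).cons_inv, rfl⟩
  · rintro ⟨a, ha, l', hl', rfl⟩
    exact (hl'.cons a).trans (toList_perm_cons_toList_erase ha).symm

/-- Conditioning on the first draw. -/
lemma setProb_eq_sum_erase (p : α → ℝ) (t : ℝ) {S : Finset α} (hS : S.Nonempty) :
    setProb p t S = ∑ a ∈ S, p a / t * setProb p (t - p a) (S.erase a) := by
  have hdisj : (S : Set α).PairwiseDisjoint
      fun a ↦ (S.erase a).toList.permutations.toFinset.image (List.cons a) := by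
    intro a _ b _ hab
    simp only [Function.onFun, disjoint_left, mem_image]
    rintro _ ⟨l, -, rfl⟩ ⟨l', -, hl'⟩
    exact hab (List.cons.inj hl').1.symm
  rw [setProb_eq_sum_toFinset, toFinset_permutations_toList_eq_biUnion hS, sum_biUnion hdisj]
  refine sum_congr rfl fun a _ ↦ ?_
  rw [sum_image fun _ _ _ _ h ↦ List.cons.inj h |>.2, setProb_eq_sum_toFinset, mul_sum]
  rfl

theorem setProb_add_sum_eq_sum_powerset {p : α → ℝ} {c : ℝ} (hc : 0 < c) {S : Finset α}
    (hp : ∀ i ∈ S, 0 < p i) :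
    setProb p (c + ∑ i ∈ S, p i) S = ∑ T ∈ S.powerset, (-1) ^ #T * (c / (c + ∑ i ∈ T, p i)) := by
  induction S using Finset.strongInduction with
  | H S ih =>
    rcases S.eq_empty_or_nonempty with rfl | hS
    · simp [hc.ne']
    have hmass : ∀ T ⊆ S, 0 < c + ∑ i ∈ T, p i := fun T hT ↦
      add_pos_of_pos_of_nonneg hc (sum_nonneg fun i hi ↦ (hp i (hT hi)).le)
    set t := c + ∑ i ∈ S, p i
    have hsub : ∀ a ∈ S, t - p a = c + ∑ i ∈ S.erase a, p i := fun a ha ↦ by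
      rw [sum_erase_eq_sub ha]; ring
    have hstep : ∀ T ⊆ S, (∑ a ∈ S \ T, p a) / t * (c / (c + ∑ i ∈ T, p i)) =
        c / (c + ∑ i ∈ T, p i) - c / t := fun T hT ↦ by
      have := hmass T hT
      have ht : 0 < t := hmass S subset_rfl
      rw [sum_sdiff_eq_sub hT]
      field_simp
      ring
    have hsign : ∑ T ∈ S.powerset, (-1 : ℝ) ^ #T = 0 := by
      exact_mod_cast sum_powerset_neg_one_pow_card_of_nonempty hS
    calc setProb p t S
        = ∑ a ∈ S, ∑ T ∈ (S.erase a).powerset,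
            p a / t * ((-1) ^ #T * (c / (c + ∑ i ∈ T, p i))) := by
          rw [setProb_eq_sum_erase p t hS]
          refine sum_congr rfl fun a ha ↦ ?_
          rw [hsub a ha, ih _ (erase_ssubset ha) fun i hi ↦ hp i (mem_of_mem_erase hi), mul_sum]
      _ = ∑ T ∈ S.powerset, ∑ a ∈ S \ T, p a / t * ((-1) ^ #T * (c / (c + ∑ i ∈ T, p i))) :=
          sum_comm' fun a T ↦ by
            simp only [mem_powerset, Finset.mem_sdiff, subset_erase]
            tauto
      _ = ∑ T ∈ S.powerset, ((-1) ^ #T * (c / (c + ∑ i ∈ T, p i)) - (-1) ^ #T * (c / t)) := by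
          refine sum_congr rfl fun T hT ↦ ?_
          rw [← sum_mul, ← sum_div, mul_left_comm, hstep T (mem_powerset.mp hT), mul_sub]
      _ = ∑ T ∈ S.powerset, (-1) ^ #T * (c / (c + ∑ i ∈ T, p i)) := by
          rw [sum_sub_distrib, ← sum_mul, hsign, zero_mul, sub_zero]

end SetProb

theorem integrable_deriv_of_nonneg_of_tendsto {f f' : ℝ → ℝ} {m n : ℝ}
    (hderiv : ∀ x, HasDerivAt f (f' x) x) (hf' : ∀ x, 0 ≤ f' x)
    (hbot : Tendsto f atBot (𝓝 m)) (htop : Tendsto f atTop (𝓝 n)) : Integrable f' := by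
  have hmono : Monotone f := monotone_of_hasDerivAt_nonneg hderiv hf'
  have hint : ∀ a b, IntegrableOn f' (Set.Ioc a b) := fun a b ↦
    intervalIntegral.integrableOn_deriv_of_nonneg
      (fun x _ ↦ (hderiv x).continuousAt.continuousWithinAt) (fun x _ ↦ hderiv x) fun x _ ↦ hf' x
  refine integrable_of_intervalIntegral_norm_bounded (n - m) (fun i ↦ hint (-i) i)
    tendsto_neg_atTop_atBot tendsto_id ?_
  filter_upwards [eventually_ge_atTop 0] with i hi
  have hle : -i ≤ i := by linarith
  calc ∫ x in -i..i, ‖f' x‖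
      = ∫ x in -i..i, f' x :=
        intervalIntegral.integral_congr fun x _ ↦ Real.norm_of_nonneg (hf' x)
    _ = f i - f (-i) :=
        intervalIntegral.integral_eq_sub_of_hasDerivAt_of_le hle
          (fun x _ ↦ (hderiv x).continuousAt.continuousWithinAt) (fun x _ ↦ hderiv x)
          ((intervalIntegrable_iff_integrableOn_Ioc_of_le hle).mpr (hint _ _))
    _ ≤ n - m := sub_le_sub (hmono.ge_of_tendsto htop i) (hmono.le_of_tendsto hbot (-i))

/-- `x ↦ exp (-(b * exp (-x)))` is the Gumbel CDF with location `log b`. -/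
lemma hasDerivAt_exp_neg_mul_exp_neg (b x : ℝ) :
    HasDerivAt (fun x ↦ exp (-(b * exp (-x)))) (b * exp (-x) * exp (-(b * exp (-x)))) x := by
  have h : HasDerivAt (fun x ↦ -(b * exp (-x))) (b * exp (-x)) x := by
    simpa using ((hasDerivAt_neg x).exp.const_mul b).fun_neg
  simpa [mul_comm] using h.exp

lemma tendsto_exp_neg_mul_exp_neg_atBot {b : ℝ} (hb : 0 < b) :
    Tendsto (fun x ↦ exp (-(b * exp (-x)))) atBot (𝓝 0) :=
  tendsto_exp_atBot.comp <| tendsto_neg_atTop_atBot.comp <|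
    (tendsto_exp_atTop.comp tendsto_neg_atBot_atTop).const_mul_atTop hb

lemma tendsto_exp_neg_mul_exp_neg_atTop (b : ℝ) :
    Tendsto (fun x ↦ exp (-(b * exp (-x)))) atTop (𝓝 1) := by
  have h : Tendsto (fun x ↦ -(b * exp (-x))) atTop (𝓝 0) := by
    simpa using ((tendsto_exp_atBot.comp tendsto_neg_atTop_atBot).const_mul b).neg
  simpa [Function.comp_def] using (continuous_exp.tendsto 0).comp h

theorem integrable_gumbel_density {b : ℝ} (hb : 0 < b) :
    Integrable fun x ↦ b * exp (-x) * exp (-(b * exp (-x))) :=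
  integrable_deriv_of_nonneg_of_tendsto (hasDerivAt_exp_neg_mul_exp_neg b)
    (fun _ ↦ by positivity) (tendsto_exp_neg_mul_exp_neg_atBot hb)
    (tendsto_exp_neg_mul_exp_neg_atTop b)

theorem integral_gumbel_density {b : ℝ} (hb : 0 < b) :
    ∫ x, b * exp (-x) * exp (-(b * exp (-x))) = 1 := by
  rw [integral_of_hasDerivAt_of_tendsto (hasDerivAt_exp_neg_mul_exp_neg b)
    (integrable_gumbel_density hb) (tendsto_exp_neg_mul_exp_neg_atBot hb)
    (tendsto_exp_neg_mul_exp_neg_atTop b), sub_zero]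

lemma exp_neg_add_log {a : ℝ} (ha : 0 < a) (x : ℝ) : exp (-x + log a) = a * exp (-x) := by
  rw [exp_add, exp_log ha, mul_comm]

lemma prod_one_sub_exp_neg_mul [DecidableEq α] (S : Finset α) (q : α → ℝ) (u : ℝ) :
    ∏ i ∈ S, (1 - exp (-(q i * u))) =
      ∑ T ∈ S.powerset, (-1) ^ #T * exp (-((∑ i ∈ T, q i) * u)) := by
  rw [prod_sub]
  refine sum_congr rfl fun T _ ↦ ?_
  rw [prod_const_one, mul_one, ← exp_sum, sum_mul, ← sum_neg_distrib]

lemma gumbel_integrand_eq_sum_powerset [DecidableEq α] {S : Finset α} {p : α → ℝ}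
    (hp : ∀ i ∈ S, 0 < p i) {c : ℝ} (hc : 0 < c) (g : ℝ) :
    exp (-g + log c) * exp (-exp (-g + log c)) * ∏ i ∈ S, (1 - exp (-exp (-g + log (p i)))) =
      ∑ T ∈ S.powerset, (-1) ^ #T * (c / (c + ∑ i ∈ T, p i)) *
        ((c + ∑ i ∈ T, p i) * exp (-g) * exp (-((c + ∑ i ∈ T, p i) * exp (-g)))) := by
  rw [prod_congr rfl fun i hi ↦ by rw [exp_neg_add_log (hp i hi)], prod_one_sub_exp_neg_mul,
    exp_neg_add_log hc, mul_sum]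
  refine sum_congr rfl fun T hT ↦ ?_
  have : c + ∑ i ∈ T, p i ≠ 0 :=
    (add_pos_of_pos_of_nonneg hc (sum_nonneg fun i hi ↦ (hp i (mem_powerset.mp hT hi)).le)).ne'
  rw [add_mul, neg_add, exp_add]
  field_simp

theorem setProb_integral_representation [DecidableEq α] (D S : Finset α) (hS : S ⊂ D)
    (p : α → ℝ) (hp : ∀ x ∈ D, 0 < p x) (hsum : ∑ x ∈ D, p x = 1) :
    setProb p 1 S = ∫ g : ℝ,
      (Real.exp (-g + Real.log (∑ i ∈ D \ S, p i)) *
        Real.exp (-Real.exp (-g + Real.log (∑ i ∈ D \ S, p i)))) *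
      ∏ i ∈ S, (1 - Real.exp (-Real.exp (-g + Real.log (p i)))) := by
  set c := ∑ i ∈ D \ S, p i
  have hc : 0 < c :=
    sum_pos (fun i hi ↦ hp i (Finset.mem_sdiff.mp hi).1) (sdiff_nonempty.mpr hS.2)
  have hpS : ∀ i ∈ S, 0 < p i := fun i hi ↦ hp i (hS.1 hi)
  have hmass : ∀ T ∈ S.powerset, 0 < c + ∑ i ∈ T, p i := fun T hT ↦
    add_pos_of_pos_of_nonneg hc (sum_nonneg fun i hi ↦ (hpS i (mem_powerset.mp hT hi)).le)
  have hlhs := setProb_add_sum_eq_sum_powerset hc hpS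
  rw [show c + ∑ i ∈ S, p i = 1 by rw [sum_sdiff hS.1, hsum]] at hlhs
  simp_rw [hlhs, gumbel_integrand_eq_sum_powerset hpS hc]
  rw [integral_finsetSum _ fun T hT ↦ (integrable_gumbel_density (hmass T hT)).const_mul _]
  exact sum_congr rfl fun T hT ↦ by
    rw [integral_const_mul, integral_gumbel_density (hmass T hT), mul_one]
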